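/- arXiv:2602.20087 — 5 statements merged into one kernel-verified Lean document; each statement's English description precedes it below -/
import Mathlib

section
/- Let v : [0,1] × [a,b] → ℝ be C¹ with v(x,t) strictly increasing in x, v(0,t) = 0, and v_x(x,t) > 0. If log v_x(x,t) is supermodular in (x,t) (i.e., v_x(x₂,t)/v_x(x₁,t) is nondecreasing in t for all x₁ < x₂), then v(x₂,t)/v(x₁,t) is nondecreasing in t for all 0 < x₁ < x₂ ≤ 1. -/
open Set MeasureTheory

/-!
Fix `t₁ < t₂` and write `f = g(·,t₁)`, `h = g(·,t₂)`; log-supermodularity says that `h / f` is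
nondecreasing. Splitting `∫₀^{x₂} = ∫₀^{x₁} + ∫_{x₁}^{x₂}`, the claim reduces to
`(∫₀^{x₁} h)(∫_{x₁}^{x₂} f) ≤ (∫₀^{x₁} f)(∫_{x₁}^{x₂} h)`. Comparing both sides with the value of
`h / f` at the pivot `x₁` gives `∫₀^{x₁} h ≤ (h/f)(x₁) ∫₀^{x₁} f` and
`(h/f)(x₁) ∫_{x₁}^{x₂} f ≤ ∫_{x₁}^{x₂} h`, and multiplying the two yields it.
-/

theorem integral_mul_integral_le_of_cross {f h : ℝ → ℝ} {l m r : ℝ} (hlm : l ≤ m) (hmr : m ≤ r)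
    (hf : ∀ s ∈ Icc l r, 0 < f s) (hh : ∀ s ∈ Icc l r, 0 < h s)
    (hfi : IntervalIntegrable f volume l r) (hhi : IntervalIntegrable h volume l r)
    (hcross : ∀ s ∈ Icc l m, ∀ u ∈ Icc m r, h s * f u ≤ f s * h u) :
    (∫ s in l..m, h s) * ∫ u in m..r, f u ≤ (∫ s in l..m, f s) * ∫ u in m..r, h u := by
  have hm : m ∈ Icc l r := ⟨hlm, hmr⟩
  have hsub_left : uIcc l m ⊆ uIcc l r := uIcc_subset_uIcc_left (mem_uIcc_of_le hlm hmr)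
  have hsub_right : uIcc m r ⊆ uIcc l r := uIcc_subset_uIcc_right (mem_uIcc_of_le hlm hmr)
  have left_pivot : (∫ s in l..m, h s) * f m ≤ (∫ s in l..m, f s) * h m := by
    rw [← intervalIntegral.integral_mul_const, ← intervalIntegral.integral_mul_const]
    refine intervalIntegral.integral_mono_on hlm ((hhi.mono_set hsub_left).mul_const _)
      ((hfi.mono_set hsub_left).mul_const _) fun s hs => hcross s hs m ⟨le_rfl, hmr⟩
  have right_pivot : h m * ∫ u in m..r, f u ≤ f m * ∫ u in m..r, h u := by
    rw [← intervalIntegral.integral_const_mul, ← intervalIntegral.integral_const_mul]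
    refine intervalIntegral.integral_mono_on hmr ((hfi.mono_set hsub_right).const_mul _)
      ((hhi.mono_set hsub_right).const_mul _) fun u hu => hcross m ⟨hlm, le_rfl⟩ u hu
  have hf_left : 0 ≤ ∫ s in l..m, f s :=
    intervalIntegral.integral_nonneg hlm fun s hs => (hf s ⟨hs.1, hs.2.trans hmr⟩).le
  have hf_right : 0 ≤ ∫ u in m..r, f u :=
    intervalIntegral.integral_nonneg hmr fun u hu => (hf u ⟨hlm.trans hu.1, hu.2⟩).le
  have hfh : 0 < f m * h m := mul_pos (hf m hm) (hh m hm)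
  have pivots := mul_le_mul left_pivot right_pivot (mul_nonneg (hh m hm).le hf_right)
    (mul_nonneg hf_left (hh m hm).le)
  refine le_of_mul_le_mul_right ?_ hfh
  linear_combination pivots

theorem integral_div_integral_le_of_cross {f h : ℝ → ℝ} {l m r : ℝ} (hlm : l < m) (hmr : m ≤ r)
    (hf : ∀ s ∈ Icc l r, 0 < f s) (hh : ∀ s ∈ Icc l r, 0 < h s)
    (hfi : IntervalIntegrable f volume l r) (hhi : IntervalIntegrable h volume l r)
    (hcross : ∀ s ∈ Icc l r, ∀ u ∈ Icc l r, s < u → h s * f u ≤ f s * h u) :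
    (∫ s in l..r, f s) / (∫ s in l..m, f s) ≤ (∫ s in l..r, h s) / ∫ s in l..m, h s := by
  have hsub : uIcc l m ⊆ uIcc l r := uIcc_subset_uIcc_left (mem_uIcc_of_le hlm.le hmr)
  have hsub' : uIcc m r ⊆ uIcc l r := uIcc_subset_uIcc_right (mem_uIcc_of_le hlm.le hmr)
  have hf_pos : 0 < ∫ s in l..m, f s := intervalIntegral.intervalIntegral_pos_of_pos_on
    (hfi.mono_set hsub) (fun s hs => hf s ⟨hs.1.le, hs.2.le.trans hmr⟩) hlm
  have hh_pos : 0 < ∫ s in l..m, h s := intervalIntegral.intervalIntegral_pos_of_pos_on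
    (hhi.mono_set hsub) (fun s hs => hh s ⟨hs.1.le, hs.2.le.trans hmr⟩) hlm
  have key := integral_mul_integral_le_of_cross hlm.le hmr hf hh hfi hhi fun s hs u hu =>
    (eq_or_lt_of_le (hs.2.trans hu.1)).elim (fun hsu => by rw [hsu, mul_comm])
      (hcross s ⟨hs.1, hs.2.trans hmr⟩ u ⟨hlm.le.trans hu.1, hu.2⟩)
  rw [← intervalIntegral.integral_add_adjacent_intervals (hfi.mono_set hsub) (hfi.mono_set hsub'),
    ← intervalIntegral.integral_add_adjacent_intervals (hhi.mono_set hsub) (hhi.mono_set hsub'),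
    div_le_div_iff₀ hf_pos hh_pos]
  linear_combination key

theorem stmt_4_general (a b : ℝ) (g v : ℝ → ℝ → ℝ)
    (hgpos : ∀ s ∈ Icc (0:ℝ) 1, ∀ t ∈ Icc a b, 0 < g s t)
    (hint : ∀ t ∈ Icc a b, IntervalIntegrable (fun s => g s t) volume 0 1)
    (hv : ∀ x ∈ Icc (0:ℝ) 1, ∀ t ∈ Icc a b, v x t = ∫ s in (0:ℝ)..x, g s t)
    (hlsm : ∀ x1 ∈ Icc (0:ℝ) 1, ∀ x2 ∈ Icc (0:ℝ) 1, x1 < x2 →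
      ∀ t1 ∈ Icc a b, ∀ t2 ∈ Icc a b, t1 < t2 →
        g x1 t2 * g x2 t1 ≤ g x1 t1 * g x2 t2) :
    ∀ x1 x2 : ℝ, 0 < x1 → x1 < x2 → x2 ≤ 1 →
      ∀ t1 ∈ Icc a b, ∀ t2 ∈ Icc a b, t1 ≤ t2 →
        v x2 t1 / v x1 t1 ≤ v x2 t2 / v x1 t2 := by
  intro x1 x2 hx1 h12 hx2 t1 ht1 t2 ht2 ht12
  obtain rfl | ht12 := eq_or_lt_of_le ht12
  · exact le_rfl
  have hx1_mem : x1 ∈ Icc (0:ℝ) 1 := ⟨hx1.le, (h12.trans_le hx2).le⟩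
  have hx2_mem : x2 ∈ Icc (0:ℝ) 1 := ⟨(hx1.trans h12).le, hx2⟩
  have hsub : Icc 0 x2 ⊆ Icc (0:ℝ) 1 := Icc_subset_Icc_right hx2
  have hint_x2 : ∀ t ∈ Icc a b, IntervalIntegrable (fun s => g s t) volume 0 x2 := fun t ht =>
    (hint t ht).mono_set (uIcc_subset_uIcc_left (mem_uIcc_of_le hx2_mem.1 hx2))
  rw [hv x1 hx1_mem t1 ht1, hv x1 hx1_mem t2 ht2, hv x2 hx2_mem t1 ht1, hv x2 hx2_mem t2 ht2]
  exact integral_div_integral_le_of_cross hx1 h12.le (fun s hs => hgpos s (hsub hs) t1 ht1)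
    (fun s hs => hgpos s (hsub hs) t2 ht2) (hint_x2 t1 ht1) (hint_x2 t2 ht2)
    fun s hs u hu hsu => hlsm s (hsub hs) u (hsub hu) hsu t1 ht1 t2 ht2 ht12

/-- If `v(x,t) = ∫₀ˣ g(s,t) ds` with `g > 0` log-supermodular in `(x,t)`, then the ratio
`v(x₂,t)/v(x₁,t)` is nondecreasing in `t` for all `0 < x₁ < x₂ ≤ 1`. -/
theorem stmt_4 (a b : ℝ) (hab : a < b) (g v : ℝ → ℝ → ℝ)
    (hgpos : ∀ s ∈ Icc (0:ℝ) 1, ∀ t ∈ Icc a b, 0 < g s t)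
    (hint : ∀ t ∈ Icc a b, IntervalIntegrable (fun s => g s t) volume 0 1)
    (hv : ∀ x ∈ Icc (0:ℝ) 1, ∀ t ∈ Icc a b, v x t = ∫ s in (0:ℝ)..x, g s t)
    (hlsm : ∀ x1 ∈ Icc (0:ℝ) 1, ∀ x2 ∈ Icc (0:ℝ) 1, x1 < x2 →
      ∀ t1 ∈ Icc a b, ∀ t2 ∈ Icc a b, t1 < t2 →
        g x1 t2 * g x2 t1 ≤ g x1 t1 * g x2 t2) :
    ∀ x1 x2 : ℝ, 0 < x1 → x1 < x2 → x2 ≤ 1 →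
      ∀ t1 ∈ Icc a b, ∀ t2 ∈ Icc a b, t1 ≤ t2 →
        v x2 t1 / v x1 t1 ≤ v x2 t2 / v x1 t2 :=
  stmt_4_general a b g v hgpos hint hv hlsm
end

section
/- Let v : [0,1] × [a,b] → ℝ satisfy v(x,t) = ∫₀ˣ g(s,t) ds with g > 0. If g(x₂,t)/g(x₁,t) is nonincreasing in t for all x₁ < x₂ (log-submodularity), then v(x₂,t)/v(x₁,t) is nonincreasing in t for all 0 < x₁ < x₂ ≤ 1. -/
/-!
Write `v(x₂,t) = v(x₁,t) + ∫_{x₁}^{x₂} g(u,t) du`. After cross-multiplying, the claim becomes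
`∫_{x₁}^{x₂} g(u,t₂) du · ∫_0^{x₁} g(s,t₁) ds ≤ ∫_{x₁}^{x₂} g(u,t₁) du · ∫_0^{x₁} g(s,t₂) ds`,
which is log-submodularity `g(s,t₁) g(u,t₂) ≤ g(s,t₂) g(u,t₁)` for `s ≤ x₁ ≤ u`, integrated in
`s` and `u`.
-/

open Set MeasureTheory

theorem intervalIntegral_mul_intervalIntegral_le {p q : ℝ → ℝ} {c d e : ℝ}
    (hcd : c ≤ d) (hde : d ≤ e)
    (hp₁ : IntervalIntegrable p volume c d) (hq₁ : IntervalIntegrable q volume c d)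
    (hp₂ : IntervalIntegrable p volume d e) (hq₂ : IntervalIntegrable q volume d e)
    (hpq : ∀ s ∈ Icc c d, ∀ u ∈ Icc d e, p s * q u ≤ q s * p u) :
    (∫ u in d..e, q u) * (∫ s in c..d, p s) ≤ (∫ u in d..e, p u) * (∫ s in c..d, q s) := by
  have inner : ∀ u ∈ Icc d e, q u * (∫ s in c..d, p s) ≤ p u * (∫ s in c..d, q s) := by
    intro u hu
    rw [← intervalIntegral.integral_const_mul, ← intervalIntegral.integral_const_mul]
    refine intervalIntegral.integral_mono_on hcd (hp₁.const_mul _) (hq₁.const_mul _) ?_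
    intro s hs
    linarith [hpq s hs u hu]
  rw [← intervalIntegral.integral_mul_const, ← intervalIntegral.integral_mul_const]
  exact intervalIntegral.integral_mono_on hde (hq₂.mul_const _) (hp₂.mul_const _) inner

theorem intervalIntegral_div_intervalIntegral_le {p q : ℝ → ℝ} {c d e : ℝ}
    (hcd : c < d) (hde : d ≤ e)
    (hp : IntervalIntegrable p volume c e) (hq : IntervalIntegrable q volume c e)
    (hp_pos : ∀ s ∈ Ioo c d, 0 < p s) (hq_pos : ∀ s ∈ Ioo c d, 0 < q s)
    (hpq : ∀ s ∈ Icc c d, ∀ u ∈ Icc d e, p s * q u ≤ q s * p u) :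
    (∫ s in c..e, q s) / (∫ s in c..d, q s) ≤ (∫ s in c..e, p s) / (∫ s in c..d, p s) := by
  have hd : d ∈ uIcc c e := mem_uIcc_of_le hcd.le hde
  have hsub₁ : uIcc c d ⊆ uIcc c e := uIcc_subset_uIcc left_mem_uIcc hd
  have hsub₂ : uIcc d e ⊆ uIcc c e := uIcc_subset_uIcc hd right_mem_uIcc
  have hp₁ := hp.mono_set hsub₁
  have hq₁ := hq.mono_set hsub₁
  have hp₂ := hp.mono_set hsub₂
  have hq₂ := hq.mono_set hsub₂
  have hP := intervalIntegral.intervalIntegral_pos_of_pos_on hp₁ hp_pos hcd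
  have hQ := intervalIntegral.intervalIntegral_pos_of_pos_on hq₁ hq_pos hcd
  have key := intervalIntegral_mul_intervalIntegral_le hcd.le hde hp₁ hq₁ hp₂ hq₂ hpq
  rw [← intervalIntegral.integral_add_adjacent_intervals hp₁ hp₂,
    ← intervalIntegral.integral_add_adjacent_intervals hq₁ hq₂, div_le_div_iff₀ hQ hP]
  linarith

theorem stmt_5_general (a b : ℝ) (g v : ℝ → ℝ → ℝ)
    (hgpos : ∀ s ∈ Icc (0:ℝ) 1, ∀ t ∈ Icc a b, 0 < g s t)
    (hint : ∀ t ∈ Icc a b, IntervalIntegrable (fun s => g s t) volume 0 1)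
    (hv : ∀ x ∈ Icc (0:ℝ) 1, ∀ t ∈ Icc a b, v x t = ∫ s in (0:ℝ)..x, g s t)
    (hlsm : ∀ x1 ∈ Icc (0:ℝ) 1, ∀ x2 ∈ Icc (0:ℝ) 1, x1 < x2 →
      ∀ t1 ∈ Icc a b, ∀ t2 ∈ Icc a b, t1 < t2 →
        g x1 t1 * g x2 t2 ≤ g x1 t2 * g x2 t1) :
    ∀ x1 x2 : ℝ, 0 < x1 → x1 < x2 → x2 ≤ 1 →
      ∀ t1 ∈ Icc a b, ∀ t2 ∈ Icc a b, t1 ≤ t2 →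
        v x2 t2 / v x1 t2 ≤ v x2 t1 / v x1 t1 := by
  intro x1 x2 hx1 hx12 hx2 t1 ht1 t2 ht2 ht12
  rcases ht12.eq_or_lt with rfl | htlt
  · exact le_rfl
  have hx1mem : x1 ∈ Icc (0:ℝ) 1 := ⟨hx1.le, hx12.le.trans hx2⟩
  have hx2mem : x2 ∈ Icc (0:ℝ) 1 := ⟨(hx1.trans hx12).le, hx2⟩
  have hint₂ : ∀ t ∈ Icc a b, IntervalIntegrable (fun s => g s t) volume 0 x2 := fun t ht =>
    (hint t ht).mono_set (uIcc_subset_uIcc left_mem_uIcc (mem_uIcc_of_le hx2mem.1 hx2))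
  have hpos : ∀ t ∈ Icc a b, ∀ s ∈ Ioo 0 x1, 0 < g s t := fun t ht s hs =>
    hgpos s ⟨hs.1.le, hs.2.le.trans hx1mem.2⟩ t ht
  rw [hv x1 hx1mem t1 ht1, hv x1 hx1mem t2 ht2, hv x2 hx2mem t1 ht1, hv x2 hx2mem t2 ht2]
  refine intervalIntegral_div_intervalIntegral_le hx1 hx12.le (hint₂ t1 ht1) (hint₂ t2 ht2)
    (hpos t1 ht1) (hpos t2 ht2) fun s hs u hu => ?_
  rcases (hs.2.trans hu.1).eq_or_lt with rfl | hsu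
  · exact (mul_comm _ _).le
  exact hlsm s ⟨hs.1, hs.2.trans hx1mem.2⟩ u ⟨hx1.le.trans hu.1, hu.2.trans hx2⟩ hsu
    t1 ht1 t2 ht2 htlt

/-- If `v(x,t) = ∫₀ˣ g(s,t) ds` with `g > 0` log-submodular in `(x,t)`, then the ratio
`v(x₂,t)/v(x₁,t)` is nonincreasing in `t` for all `0 < x₁ < x₂ ≤ 1`. -/
theorem stmt_5 (a b : ℝ) (hab : a < b) (g v : ℝ → ℝ → ℝ)
    (hgpos : ∀ s ∈ Icc (0:ℝ) 1, ∀ t ∈ Icc a b, 0 < g s t)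
    (hint : ∀ t ∈ Icc a b, IntervalIntegrable (fun s => g s t) volume 0 1)
    (hv : ∀ x ∈ Icc (0:ℝ) 1, ∀ t ∈ Icc a b, v x t = ∫ s in (0:ℝ)..x, g s t)
    (hlsm : ∀ x1 ∈ Icc (0:ℝ) 1, ∀ x2 ∈ Icc (0:ℝ) 1, x1 < x2 →
      ∀ t1 ∈ Icc a b, ∀ t2 ∈ Icc a b, t1 < t2 →
        g x1 t1 * g x2 t2 ≤ g x1 t2 * g x2 t1) :
    ∀ x1 x2 : ℝ, 0 < x1 → x1 < x2 → x2 ≤ 1 →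
      ∀ t1 ∈ Icc a b, ∀ t2 ∈ Icc a b, t1 ≤ t2 →
        v x2 t2 / v x1 t2 ≤ v x2 t1 / v x1 t1 :=
  stmt_5_general a b g v hgpos hint hv hlsm
end

section
/- Consider the linear program over u ∈ ℝⁿ: maximize ∑ᵢ μᵢ(λᵢ − 1)uᵢ subject to uᵢ ≥ uⱼ + Δⱼᵢ for all i > j (with Δⱼᵢ ≥ 0 given constants) and uᵢ ≥ 0 for all i, where μᵢ > 0, ∑ᵢ μᵢ λᵢ ≤ ∑ᵢ μᵢ, and λ is nonincreasing with λᵢ ≥ 0. Then the objective is bounded above on the feasible set, and hence the LP attains a maximum. -/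
/-!
Feasible points are nonnegative and nondecreasing, so each is the vector of partial sums of its
nonnegative increments (with `u₋₁ = 0`). Capping every increment at a bound `D ≥ Δⱼᵢ` keeps the
point feasible, because a gap `uᵢ - uⱼ` either keeps all its increments or contains a full
increment `D`, and it moves the point into the box `[0, n D]`. By summation by parts the
objective is `∑ₖ incrₖ · ∑_{i ≥ k} cᵢ`, and every tail sum of `cᵢ = μᵢ (λᵢ - 1)` is `≤ 0`
since `λ` is nonincreasing and the total is `≤ 0`; so capping does not decrease the objective,
and the supremum over the polyhedron is a maximum over a compact set.
-/

/-- Feasibility for the downward-IC linear program: `u` satisfies the (global) downward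
incentive constraints with increments `Δ` and is individually rational. -/
def FeasibleLP (n : ℕ) (Δ : Fin n → Fin n → ℝ) (u : Fin n → ℝ) : Prop :=
  (∀ i j : Fin n, j < i → u j + Δ j i ≤ u i) ∧ ∀ i : Fin n, 0 ≤ u i

open Finset

section SummationByParts

variable {ι : Type*} [Fintype ι] [Preorder ι] [LocallyFiniteOrderBot ι] [LocallyFiniteOrderTop ι]

theorem sum_mul_sum_Iic_eq {R : Type*} [CommSemiring R] (c a : ι → R) :
    ∑ i, c i * ∑ k ∈ Iic i, a k = ∑ k, a k * ∑ i ∈ Ici k, c i := by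
  simp_rw [mul_sum]
  rw [sum_comm' (t' := univ) (s' := Ici)]
  · exact sum_congr rfl fun k _ => sum_congr rfl fun i _ => mul_comm _ _
  · simp

theorem sum_mul_sum_Iic_nonpos {c a : ι → ℝ} (hc : ∀ k, ∑ i ∈ Ici k, c i ≤ 0)
    (ha : ∀ k, 0 ≤ a k) : ∑ i, c i * ∑ k ∈ Iic i, a k ≤ 0 := by
  rw [sum_mul_sum_Iic_eq]
  exact sum_nonpos fun k _ => mul_nonpos_of_nonneg_of_nonpos (ha k) (hc k)

end SummationByParts

theorem sum_Ici_mul_nonpos_of_antitone {ι : Type*} [Fintype ι] [LinearOrder ι]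
    [LocallyFiniteOrderTop ι] {w g : ι → ℝ} (hw : ∀ i, 0 ≤ w i) (hg : Antitone g)
    (hsum : ∑ i, w i * g i ≤ 0) (k : ι) : ∑ i ∈ Ici k, w i * g i ≤ 0 := by
  rcases le_or_gt (g k) 0 with hk | hk
  · exact sum_nonpos fun i hi => mul_nonpos_of_nonneg_of_nonpos (hw i)
      ((hg (mem_Ici.1 hi)).trans hk)
  · have hhead : 0 ≤ ∑ i ∈ univ.filter (¬ k ≤ ·), w i * g i :=
      sum_nonneg fun i hi => mul_nonneg (hw i)
        (hk.le.trans (hg (not_le.1 (mem_filter.1 hi).2).le))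
    rw [← sum_filter_add_sum_filter_not univ (k ≤ ·), filter_le_eq_Ici] at hsum
    linarith

theorem min_sum_le_sum_min {ι : Type*} {s : Finset ι} {a : ι → ℝ} {D : ℝ}
    (ha : ∀ i ∈ s, 0 ≤ a i) (hD : 0 ≤ D) : min (∑ i ∈ s, a i) D ≤ ∑ i ∈ s, min (a i) D := by
  by_cases h : ∃ i ∈ s, D ≤ a i
  · obtain ⟨i, hi, hDi⟩ := h
    calc min (∑ i ∈ s, a i) D ≤ min (a i) D := (min_le_right _ _).trans_eq (min_eq_right hDi).symm
      _ ≤ ∑ i ∈ s, min (a i) D := single_le_sum (fun j hj => le_min (ha j hj) hD) hi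
  · push Not at h
    rw [sum_congr rfl fun i hi => min_eq_left (h i hi).le]
    exact min_le_left _ _

theorem sum_Iic_sub_sum_Iic {ι M : Type*} [LinearOrder ι] [LocallyFiniteOrder ι]
    [LocallyFiniteOrderBot ι] [AddCommGroup M] (a : ι → M) {i j : ι} (h : j ≤ i) :
    ∑ k ∈ Iic i, a k - ∑ k ∈ Iic j, a k = ∑ k ∈ Ioc j i, a k := by
  rw [← Iic_union_Ioc_eq_Iic h, sum_union (Iic_disjoint_Ioc le_rfl), add_sub_cancel_left]

theorem IsCompact.exists_isMaxOn_of_dominated {X α : Type*} [TopologicalSpace X] [LinearOrder α]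
    [TopologicalSpace α] [ClosedIciTopology α] {S K : Set X} {f : X → α} (hK : IsCompact K)
    (hKS : K ⊆ S) (hf : ContinuousOn f K) (hS : S.Nonempty)
    (hdom : ∀ u ∈ S, ∃ v ∈ K, f u ≤ f v) : ∃ u' ∈ S, IsMaxOn f S u' := by
  obtain ⟨v₀, hv₀, -⟩ := hdom _ hS.some_mem
  obtain ⟨u', hu', hmax⟩ := hK.exists_isMaxOn ⟨v₀, hv₀⟩ hf
  refine ⟨u', hKS hu', fun u hu => ?_⟩
  obtain ⟨v, hv, huv⟩ := hdom u hu
  exact huv.trans (hmax hv)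

namespace FeasibleLP

variable {n : ℕ} {Δ : Fin n → Fin n → ℝ} {u : Fin n → ℝ}

theorem monotone (hΔ : ∀ i j : Fin n, j < i → 0 ≤ Δ j i) (hu : FeasibleLP n Δ u) :
    Monotone u := by
  intro j i hji
  rcases hji.eq_or_lt with rfl | hlt
  · rfl
  · linarith [hu.1 i j hlt, hΔ i j hlt]

theorem isClosed : IsClosed {u | FeasibleLP n Δ u} := by
  simp only [FeasibleLP, Set.ofPred_and, Set.ofPred_forall]
  refine .inter (isClosed_iInter fun i => isClosed_iInter fun j => isClosed_iInter fun _ => ?_)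
    (isClosed_iInter fun i => ?_) <;>
  exact isClosed_le (by fun_prop) (by fun_prop)

end FeasibleLP

section Increments

variable {n : ℕ}

/-- `u i - u (i - 1)`, with the convention `u₋₁ = 0`. -/
def increments (u : Fin n → ℝ) (i : Fin n) : ℝ :=
  u i - (Fin.cons 0 u : Fin (n + 1) → ℝ) i.castSucc

theorem sum_Iic_increments (u : Fin n → ℝ) (i : Fin n) : ∑ k ∈ Iic i, increments u k = u i := by
  simpa [increments] using Fin.sum_Iic_sub i (Fin.cons 0 u : Fin (n + 1) → ℝ)

theorem increments_nonneg {u : Fin n → ℝ} (hu : Monotone u) (h0 : ∀ i, 0 ≤ u i) (i : Fin n) :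
    0 ≤ increments u i := by
  rw [increments, sub_nonneg]
  rcases Fin.eq_zero_or_eq_succ i.castSucc with h | ⟨j, hj⟩
  · rw [h, Fin.cons_zero]
    exact h0 i
  · rw [hj, Fin.cons_succ]
    exact hu (Fin.succ_le_castSucc_iff.1 hj.ge).le

def capIncrements (D : ℝ) (u : Fin n → ℝ) (i : Fin n) : ℝ :=
  ∑ k ∈ Iic i, min (increments u k) D

end Increments

section Truncation

variable {n : ℕ} {Δ : Fin n → Fin n → ℝ} {u : Fin n → ℝ} {D : ℝ}

theorem feasibleLP_capIncrements (hΔ : ∀ i j : Fin n, j < i → 0 ≤ Δ j i)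
    (hD : ∀ i j, Δ j i ≤ D) (hD0 : 0 ≤ D) (hu : FeasibleLP n Δ u) :
    FeasibleLP n Δ (capIncrements D u) := by
  have he := increments_nonneg (hu.monotone hΔ) hu.2
  refine ⟨fun i j hji => ?_, fun i => sum_nonneg fun k _ => le_min (he k) hD0⟩
  have hgap : Δ j i ≤ capIncrements D u i - capIncrements D u j := calc
    Δ j i ≤ min (u i - u j) D := le_min (by linarith [hu.1 i j hji]) (hD i j)
    _ = min (∑ k ∈ Ioc j i, increments u k) D := by
      rw [← sum_Iic_sub_sum_Iic _ hji.le, sum_Iic_increments, sum_Iic_increments]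
    _ ≤ ∑ k ∈ Ioc j i, min (increments u k) D := min_sum_le_sum_min (fun k _ => he k) hD0
    _ = _ := (sum_Iic_sub_sum_Iic _ hji.le).symm
  linarith

theorem feasibleLP_val_mul (hD : ∀ i j, Δ j i ≤ D) (hD0 : 0 ≤ D) :
    FeasibleLP n Δ fun i => (i : ℝ) * D := by
  refine ⟨fun i j hji => ?_, fun i => by positivity⟩
  have hji' : (j : ℝ) + 1 ≤ i := by exact_mod_cast hji
  nlinarith [hD i j]

theorem capIncrements_le (hD0 : 0 ≤ D) (i : Fin n) : capIncrements D u i ≤ (n : ℝ) * D := calc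
  capIncrements D u i ≤ #(Iic i) • D := sum_le_card_nsmul _ _ _ fun k _ => min_le_right _ _
  _ ≤ (n : ℝ) * D := by
    rw [nsmul_eq_mul]
    gcongr
    exact_mod_cast (card_le_univ _).trans_eq (Fintype.card_fin n)

theorem sum_mul_le_sum_mul_capIncrements {c : Fin n → ℝ} (hc : ∀ k, ∑ i ∈ Ici k, c i ≤ 0)
    (u : Fin n → ℝ) : ∑ i, c i * u i ≤ ∑ i, c i * capIncrements D u i := by
  have key : ∑ i, c i * ∑ k ∈ Iic i, (increments u k - min (increments u k) D) ≤ 0 :=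
    sum_mul_sum_Iic_nonpos hc fun k => sub_nonneg.2 (min_le_left _ _)
  simp only [sum_sub_distrib, sum_Iic_increments, mul_sub] at key
  exact sub_nonpos.1 key

end Truncation

theorem FeasibleLP.exists_isMaxOn {n : ℕ} {Δ : Fin n → Fin n → ℝ}
    (hΔ : ∀ i j : Fin n, j < i → 0 ≤ Δ j i) {c : Fin n → ℝ} (hc : ∀ k, ∑ i ∈ Ici k, c i ≤ 0) :
    ∃ u' ∈ {u | FeasibleLP n Δ u},
      IsMaxOn (fun u => ∑ i, c i * u i) {u | FeasibleLP n Δ u} u' := by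
  obtain ⟨D₀, hD₀⟩ := Finite.exists_le (Function.uncurry Δ)
  set D := max D₀ 0
  have hD : ∀ i j, Δ j i ≤ D := fun i j => (hD₀ (j, i)).trans (le_max_left _ _)
  have hD0 : 0 ≤ D := le_max_right _ _
  have hcap : ∀ u, FeasibleLP n Δ u → FeasibleLP n Δ (capIncrements D u) :=
    fun u => feasibleLP_capIncrements hΔ hD hD0
  refine IsCompact.exists_isMaxOn_of_dominated
    (K := {u | FeasibleLP n Δ u} ∩ Set.Icc 0 fun _ => n * D)
    (isCompact_Icc.inter_left FeasibleLP.isClosed) Set.inter_subset_left (by fun_prop)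
    ⟨_, feasibleLP_val_mul hD hD0⟩ fun u hu => ?_
  exact ⟨capIncrements D u, ⟨hcap u hu, (hcap u hu).2, capIncrements_le hD0⟩,
    sum_mul_le_sum_mul_capIncrements hc u⟩

theorem stmt_8_general (n : ℕ) (μ lam : Fin n → ℝ) (Δ : Fin n → Fin n → ℝ)
    (hμ : ∀ i, 0 < μ i) (hlam : Antitone lam)
    (hnorm : ∑ i, μ i * lam i ≤ ∑ i, μ i)
    (hΔ : ∀ i j : Fin n, j < i → 0 ≤ Δ j i) :
    (∃ M : ℝ, ∀ u : Fin n → ℝ, FeasibleLP n Δ u →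
        ∑ i, μ i * (lam i - 1) * u i ≤ M) ∧
    (∃ u' : Fin n → ℝ, FeasibleLP n Δ u' ∧
        ∀ u : Fin n → ℝ, FeasibleLP n Δ u →
          ∑ i, μ i * (lam i - 1) * u i ≤ ∑ i, μ i * (lam i - 1) * u' i) := by
  have htotal : ∑ i, μ i * (lam i - 1) ≤ 0 := by
    simp only [mul_sub, mul_one, sum_sub_distrib]
    linarith
  have htail := sum_Ici_mul_nonpos_of_antitone (fun i => (hμ i).le)
    (fun i j hij => sub_le_sub_right (hlam hij) 1) htotal
  obtain ⟨u', hu', hmax⟩ := FeasibleLP.exists_isMaxOn hΔ htail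
  exact ⟨⟨_, hmax⟩, u', hu', hmax⟩

/-- The downward-IC linear program `max ∑ μᵢ (λᵢ − 1) uᵢ` over the feasible polyhedron is
bounded above, and hence attains its maximum. -/
theorem stmt_8 (n : ℕ) (μ lam : Fin n → ℝ) (Δ : Fin n → Fin n → ℝ)
    (hμ : ∀ i, 0 < μ i) (hlam0 : ∀ i, 0 ≤ lam i) (hlam : Antitone lam)
    (hnorm : ∑ i, μ i * lam i ≤ ∑ i, μ i)
    (hΔ : ∀ i j : Fin n, j < i → 0 ≤ Δ j i) :
    (∃ M : ℝ, ∀ u : Fin n → ℝ, FeasibleLP n Δ u →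
        ∑ i, μ i * (lam i - 1) * u i ≤ M) ∧
    (∃ u' : Fin n → ℝ, FeasibleLP n Δ u' ∧
        ∀ u : Fin n → ℝ, FeasibleLP n Δ u →
          ∑ i, μ i * (lam i - 1) * u i ≤ ∑ i, μ i * (lam i - 1) * u' i) :=
  stmt_8_general n μ lam Δ hμ hlam hnorm hΔ
end

section
/- Let {z₁ < ⋯ < z_m} ⊂ ℝ and let Q be a probability measure supported on {z₁,…,z_m} with mean z̄ ∈ [zᵢ, z_{i+1}]. Let P be the unique two-point distribution on {zᵢ, z_{i+1}} with mean z̄. Then for every convex g : ℝ → ℝ, ∫ g dP ≤ ∫ g dQ. -/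
open Set MeasureTheory

/-!
No grid point lies strictly between `zᵢ` and `zᵢ₊₁`, and outside that interval a convex `g`
lies above its chord over `[zᵢ, zᵢ₊₁]`. So the chord, an affine function, is a minorant of `g`
on the support of `Q`; integrating it against `Q` evaluates it at the mean `z̄`, where it equals
the left-hand side.
-/

theorem ConvexOn.add_secant_mul_le {𝕜 : Type*} [Field 𝕜] [LinearOrder 𝕜] [IsStrictOrderedRing 𝕜]
    {s : Set 𝕜} {g : 𝕜 → 𝕜} (hg : ConvexOn 𝕜 s g) {a b x : 𝕜} (ha : a ∈ s) (hb : b ∈ s)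
    (hx : x ∈ s) (hab : a < b) (hxab : x ∉ Ioo a b) :
    g a + (g b - g a) / (b - a) * (x - a) ≤ g x := by
  rcases lt_trichotomy x a with hxa | rfl | hax
  · have hslope := hg.secant_mono ha hx hb hxa.ne hab.ne' (hxa.trans hab).le
    rw [div_le_iff_of_neg (sub_neg.2 hxa)] at hslope
    linarith
  · simp
  · have hbx : b ≤ x := not_lt.1 fun hxb => hxab ⟨hax, hxb⟩
    have hslope := hg.secant_mono ha hb hx hab.ne' hax.ne' hbx
    rw [le_div_iff₀ (sub_pos.2 hax)] at hslope
    linarith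

theorem StrictMonoOn.apply_notMem_Ioo_apply_add_one {β : Type*} [Preorder β] {f : ℕ → β}
    {s : Set ℕ} (hf : StrictMonoOn f s) {i k : ℕ} (hi : i ∈ s) (hi' : i + 1 ∈ s) (hk : k ∈ s) :
    f k ∉ Ioo (f i) (f (i + 1)) := by
  rintro ⟨hik, hki⟩
  rcases le_or_gt k i with hle | hlt
  · exact (hf.monotoneOn hk hi hle).not_gt hik
  · exact (hf.monotoneOn hi' hk hlt).not_gt hki

theorem integrable_id_of_ae_mem_of_isBounded {μ : Measure ℝ} [IsFiniteMeasure μ] {S : Set ℝ}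
    (hS : Bornology.IsBounded S) (h : ∀ᵐ x ∂μ, x ∈ S) : Integrable (fun x => x) μ := by
  obtain ⟨C, hC⟩ := hS.exists_norm_le
  exact .of_bound aestronglyMeasurable_id C (h.mono hC)

theorem add_mul_integral_sub_le_integral {μ : Measure ℝ} [IsProbabilityMeasure μ] {g : ℝ → ℝ}
    (hid : Integrable (fun x => x) μ) (hg : Integrable g μ) {c s a : ℝ}
    (h : ∀ᵐ x ∂μ, c + s * (x - a) ≤ g x) :
    c + s * (∫ x, x ∂μ - a) ≤ ∫ x, g x ∂μ := by
  have hshift : Integrable (fun x => s * (x - a)) μ := (hid.sub (integrable_const a)).const_mul s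
  calc c + s * (∫ x, x ∂μ - a) = ∫ x, c + s * (x - a) ∂μ := by
        rw [integral_add (integrable_const c) hshift, integral_const_mul,
          integral_sub hid (integrable_const a)]
        simp
    _ ≤ ∫ x, g x ∂μ := integral_mono_ae ((integrable_const c).add hshift) hg h

theorem stmt_15_general (m : ℕ) (z : ℕ → ℝ)
    (hz : ∀ k, k + 1 < m → z k < z (k + 1))
    (i : ℕ) (hi : i + 1 < m)
    (Q : Measure ℝ) [IsProbabilityMeasure Q]
    (hQsupp : Q (z '' {k | k < m}) = 1)
    (zbar : ℝ) (hzbar : zbar = ∫ x, x ∂Q)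
    (g : ℝ → ℝ) (hg : ConvexOn ℝ univ g)
    (hgQ : Integrable g Q) :
    (1 - (zbar - z i) / (z (i + 1) - z i)) * g (z i) +
      (zbar - z i) / (z (i + 1) - z i) * g (z (i + 1)) ≤ ∫ x, g x ∂Q := by
  have hzi : z i < z (i + 1) := hz i hi
  have hmono : StrictMonoOn z {k | k < m} :=
    strictMonoOn_of_lt_succ ordConnected_Iio fun k _ _ hk => hz k hk
  have hgrid : (z '' {k | k < m}).Finite := (finite_lt_nat m).image z
  have hsupp : ∀ᵐ x ∂Q, x ∈ z '' {k | k < m} := by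
    rw [ae_mem_iff_measure_eq hgrid.measurableSet.nullMeasurableSet, hQsupp, measure_univ]
  have hchord : ∀ᵐ x ∂Q,
      g (z i) + (g (z (i + 1)) - g (z i)) / (z (i + 1) - z i) * (x - z i) ≤ g x := by
    filter_upwards [hsupp]
    rintro _ ⟨k, hk, rfl⟩
    exact hg.add_secant_mul_le (mem_univ _) (mem_univ _) (mem_univ _) hzi
      (hmono.apply_notMem_Ioo_apply_add_one (Nat.lt_of_succ_lt hi) hi hk)
  have hchord_mean := add_mul_integral_sub_le_integral
    (integrable_id_of_ae_mem_of_isBounded hgrid.isBounded hsupp) hgQ hchord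
  rw [← hzbar] at hchord_mean
  convert hchord_mean using 1
  field_simp [(sub_pos.2 hzi).ne']
  ring

/-- The two-point distribution on `{zᵢ, z_{i+1}}` with the same mean `z̄` as a distribution
`Q` supported on the grid `z₀ < ⋯ < z_{m-1}` is minimal in the convex order: for every
convex `g`, `(1-α) g(zᵢ) + α g(z_{i+1}) ≤ ∫ g dQ`, where `α = (z̄ − zᵢ)/(z_{i+1} − zᵢ)`. -/
theorem stmt_15 (m : ℕ) (z : ℕ → ℝ)
    (hz : ∀ k, k + 1 < m → z k < z (k + 1))
    (i : ℕ) (hi : i + 1 < m)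
    (Q : Measure ℝ) [IsProbabilityMeasure Q]
    (hQsupp : Q (z '' {k | k < m}) = 1)
    (zbar : ℝ) (hzbar : zbar = ∫ x, x ∂Q)
    (hmean_loc : zbar ∈ Icc (z i) (z (i + 1)))
    (g : ℝ → ℝ) (hg : ConvexOn ℝ univ g)
    (hgQ : Integrable g Q) :
    (1 - (zbar - z i) / (z (i + 1) - z i)) * g (z i) +
      (zbar - z i) / (z (i + 1) - z i) * g (z (i + 1)) ≤ ∫ x, g x ∂Q :=
  stmt_15_general m z hz i hi Q hQsupp zbar hzbar g hg hgQ
end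

section
/- Let v : X × [a,b] → ℝ where (X, ≼) is a partially ordered set, and suppose v(·, t) has strict increasing differences: for x ≺ x' and t < t', v(x',t') − v(x,t') > v(x',t) − v(x,t). Let a, a' be probability measures on X with a ≼_st a' (stochastic dominance: ∫h da ≤ ∫h da' for all monotone bounded measurable h) and a ≠ a'. Suppose there exists a coupling (Y, Y') of (a, a') with Y ≼ Y' almost surely and P(Y ≺ Y') > 0. Then for all t < t', ∫ (v(x,t') − v(x,t)) da(x) < ∫ (v(x,t') − v(x,t)) da'(x). -/
/-!
By increasing differences the increment `x ↦ v x t' - v x t` is strictly monotone. Along the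
coupling its value at `Y'` therefore dominates its value at `Y` almost surely, strictly on the
event `Y < Y'` of positive probability, and integrating gives the strict inequality.
-/

open Set MeasureTheory

section

variable {α : Type*} [MeasurableSpace α] {μ : Measure α}

theorem integral_lt_integral_of_ae_le_of_measure_setOf_lt_ne_zero {f g : α → ℝ}
    (hf : Integrable f μ) (hg : Integrable g μ) (hle : f ≤ᵐ[μ] g)
    (hlt : μ {x | f x < g x} ≠ 0) : ∫ x, f x ∂μ < ∫ x, g x ∂μ := by
  rw [← sub_pos, ← integral_sub hg hf,
    integral_pos_iff_support_of_nonneg_ae (hle.mono fun x hx => sub_nonneg.2 hx) (hg.sub hf)]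
  refine pos_iff_ne_zero.2 fun h => hlt (measure_mono_null (fun x hx => ?_) h)
  exact (sub_pos.2 hx).ne'

theorem integral_comp_lt_integral_comp_of_ae_le {X : Type*} [PartialOrder X] {g : X → ℝ}
    (hg : StrictMono g) {Y Y' : α → X} (hint : Integrable (g ∘ Y) μ)
    (hint' : Integrable (g ∘ Y') μ) (hle : ∀ᵐ ω ∂μ, Y ω ≤ Y' ω)
    (hlt : μ {ω | Y ω < Y' ω} ≠ 0) : ∫ ω, g (Y ω) ∂μ < ∫ ω, g (Y' ω) ∂μ :=
  integral_lt_integral_of_ae_le_of_measure_setOf_lt_ne_zero hint hint'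
    (hle.mono fun _ hω => hg.monotone hω)
    fun h => hlt (measure_mono_null (fun _ hω => hg hω) h)

end

theorem stmt_18_general {X : Type*} [MeasurableSpace X] [PartialOrder X]
    (ta tb : ℝ) (v : X → ℝ → ℝ)
    (hmeas : ∀ t, Measurable fun x => v x t)
    (hbdd : ∃ C : ℝ, ∀ x t, |v x t| ≤ C)
    (hID : ∀ x x' : X, x < x' → ∀ t t' : ℝ, t ∈ Icc ta tb → t' ∈ Icc ta tb → t < t' →
      v x' t - v x t < v x' t' - v x t')
    (ν ν' : Measure X)
    {Ω : Type*} [MeasurableSpace Ω] (P : Measure Ω) [IsProbabilityMeasure P]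
    (Y Y' : Ω → X) (hY : Measurable Y) (hY' : Measurable Y')
    (hmapY : Measure.map Y P = ν) (hmapY' : Measure.map Y' P = ν')
    (hle : ∀ᵐ ω ∂P, Y ω ≤ Y' ω)
    (hlt : 0 < P {ω | Y ω < Y' ω}) :
    ∀ t ∈ Icc ta tb, ∀ t' ∈ Icc ta tb, t < t' →
      ∫ x, (v x t' - v x t) ∂ν < ∫ x, (v x t' - v x t) ∂ν' := by
  intro t ht t' ht' htt'
  obtain ⟨C, hC⟩ := hbdd
  set g : X → ℝ := fun x => v x t' - v x t
  have hg_meas : Measurable g := (hmeas t').sub (hmeas t)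
  have hg_mono : StrictMono g := fun x x' hx => by
    have := hID x x' hx t t' ht ht' htt'
    simp only [g]
    linarith
  have hg_int : ∀ Z : Ω → X, Measurable Z → Integrable (g ∘ Z) P := fun Z hZ =>
    .of_bound (hg_meas.comp hZ).aestronglyMeasurable (2 * C) <| ae_of_all _ fun ω => by
      simp only [Function.comp, g, Real.norm_eq_abs]
      linarith [abs_sub (v (Z ω) t') (v (Z ω) t), hC (Z ω) t', hC (Z ω) t]
  rw [← hmapY, ← hmapY', integral_map hY.aemeasurable hg_meas.aestronglyMeasurable,
    integral_map hY'.aemeasurable hg_meas.aestronglyMeasurable]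
  exact integral_comp_lt_integral_comp_of_ae_le hg_mono (hg_int Y hY) (hg_int Y' hY') hle hlt.ne'

/-- Under strict increasing differences, a strictly stochastically larger lottery
(witnessed by a monotone coupling that is strictly larger with positive probability)
yields a strictly larger expected incremental value. -/
theorem stmt_18 {X : Type*} [MeasurableSpace X] [PartialOrder X]
    (ta tb : ℝ) (v : X → ℝ → ℝ)
    (hmeas : ∀ t, Measurable fun x => v x t)
    (hbdd : ∃ C : ℝ, ∀ x t, |v x t| ≤ C)
    (hID : ∀ x x' : X, x < x' → ∀ t t' : ℝ, t ∈ Icc ta tb → t' ∈ Icc ta tb → t < t' →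
      v x' t - v x t < v x' t' - v x t')
    (ν ν' : Measure X) [IsProbabilityMeasure ν] [IsProbabilityMeasure ν']
    (hne : ν ≠ ν')
    (hst : ∀ h : X → ℝ, Monotone h → Measurable h → (∃ C : ℝ, ∀ x, |h x| ≤ C) →
      ∫ x, h x ∂ν ≤ ∫ x, h x ∂ν')
    {Ω : Type*} [MeasurableSpace Ω] (P : Measure Ω) [IsProbabilityMeasure P]
    (Y Y' : Ω → X) (hY : Measurable Y) (hY' : Measurable Y')
    (hmapY : Measure.map Y P = ν) (hmapY' : Measure.map Y' P = ν')
    (hle : ∀ᵐ ω ∂P, Y ω ≤ Y' ω)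
    (hlt : 0 < P {ω | Y ω < Y' ω}) :
    ∀ t ∈ Icc ta tb, ∀ t' ∈ Icc ta tb, t < t' →
      ∫ x, (v x t' - v x t) ∂ν < ∫ x, (v x t' - v x t) ∂ν' :=
  stmt_18_general ta tb v hmeas hbdd hID ν ν' P Y Y' hY hY' hmapY hmapY' hle hlt
end
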